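/- arXiv:1410.0953 — 3 statements merged into one kernel-verified Lean document; each statement's English description precedes it below -/
import Mathlib

section
/- Define ℓ^{∞∞}(ℤ) to be the set of bounded functions φ : ℤ → ℂ such that for every ultrafilter U on ℤ and every natural number d, the limit along U of n^d (φ(n) − lim_U φ) is 0. Then ℓ^{∞∞}(ℤ) is closed under pointwise multiplication. -/
open Filter

/-- A projection: a `{0,1}`-valued function. -/
def IsProj (p : ℤ → ℂ) : Prop := ∀ n, p n = 0 ∨ p n = 1

/-- Schwartz functions on `ℤ`: all moments `sup_n |n|^k |φ(n)|` are finite. -/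
def IsSchwartz (φ : ℤ → ℂ) : Prop :=
  ∀ k : ℕ, ∃ C : ℝ, ∀ n : ℤ, (n.natAbs : ℝ)^k * ‖φ n‖ ≤ C

/-- Membership in `ℓ^{∞∞}(ℤ)`: `φ` is bounded and, for every ultrafilter `U` on
`ℤ` and every `d ∈ ℕ`, `n^d (φ(n) − lim_U φ) → 0` along `U`. -/
def SmoothInf (φ : ℤ → ℂ) : Prop :=
  (∃ C, ∀ n, ‖φ n‖ ≤ C) ∧
  ∀ (U : Ultrafilter ℤ) (d : ℕ) (L : ℂ), Tendsto φ ↑U (nhds L) →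
    Tendsto (fun n : ℤ => (n : ℂ)^d * (φ n - L)) ↑U (nhds 0)

open Set Topology

lemma exists_tendsto_ultrafilter_of_norm_le {α E : Type*} [SeminormedAddCommGroup E]
    [ProperSpace E] {f : α → E} {C : ℝ} (hf : ∀ a, ‖f a‖ ≤ C) (U : Ultrafilter α) :
    ∃ x, Tendsto f U (𝓝 x) := by
  have hbdd : Bornology.IsBounded (range f) :=
    isBounded_iff_forall_norm_le.2 ⟨C, forall_mem_range.2 hf⟩
  have hle : ↑(U.map f) ≤ 𝓟 (closure (range f)) :=
    le_principal_iff.2 (mem_map.2 (univ_mem' fun a => subset_closure (mem_range_self a)))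
  obtain ⟨x, -, hx⟩ := hbdd.isCompact_closure.ultrafilter_le_nhds (U.map f) hle
  exact ⟨x, hx⟩

lemma tendsto_weight_mul_mul_sub_mul {α R : Type*} [CommRing R] [TopologicalSpace R]
    [IsTopologicalRing R] {l : Filter α} {w f g : α → R} {a b : R}
    (hf : Tendsto (fun x => w x * (f x - a)) l (𝓝 0)) (hg : Tendsto g l (𝓝 b))
    (hg' : Tendsto (fun x => w x * (g x - b)) l (𝓝 0)) :
    Tendsto (fun x => w x * (f x * g x - a * b)) l (𝓝 0) := by
  have hsplit : ∀ x, w x * (f x * g x - a * b) = w x * (f x - a) * g x + a * (w x * (g x - b)) :=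
    fun x => by ring
  simpa only [hsplit, zero_mul, mul_zero, add_zero] using (hf.mul hg).add (hg'.const_mul a)

/-- `ℓ^{∞∞}(ℤ)` is closed under pointwise multiplication. -/
theorem stmt_5 (φ ψ : ℤ → ℂ) (hφ : SmoothInf φ) (hψ : SmoothInf ψ) :
    SmoothInf (fun n => φ n * ψ n) := by
  obtain ⟨⟨C, hC⟩, hφ⟩ := hφ
  obtain ⟨⟨D, hD⟩, hψ⟩ := hψ
  refine ⟨⟨C * D, fun n => norm_mul_le_of_le (hC n) (hD n)⟩, fun U d L hL => ?_⟩
  obtain ⟨A, hA⟩ := exists_tendsto_ultrafilter_of_norm_le hC U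
  obtain ⟨B, hB⟩ := exists_tendsto_ultrafilter_of_norm_le hD U
  obtain rfl : L = A * B := tendsto_nhds_unique hL (hA.mul hB)
  exact tendsto_weight_mul_mul_sub_mul (hφ U d A hA) hB (hψ U d B hB)
end

section
/- The inclusion ℓ^{∞∞}(ℤ) ⊆ ℓ^∞(ℤ) is proper. -/
open Filter

/-! The function `n ↦ 1/n` is bounded and tends to `0` along the cofinite filter, hence along
every non-principal ultrafilter; but `n · (1/n - 0) = 1` for `n ≠ 0`, so the `d = 1` decay fails. -/

theorem SmoothInf.tendsto_cofinite {φ : ℤ → ℂ} (hφ : SmoothInf φ) {L : ℂ}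
    (hL : Tendsto φ cofinite (nhds L)) (d : ℕ) :
    Tendsto (fun n : ℤ => (n : ℂ) ^ d * (φ n - L)) cofinite (nhds 0) :=
  (tendsto_iff_ultrafilter _ _ _).2 fun U hU => hφ.2 U d L (hL.mono_left hU)

theorem norm_intCast_inv_le_one (n : ℤ) : ‖(n : ℂ)⁻¹‖ ≤ 1 := by
  rcases eq_or_ne n 0 with rfl | hn
  · simp
  · rw [norm_inv, Complex.norm_intCast]
    exact inv_le_one_of_one_le₀ (mod_cast Int.one_le_abs hn)

theorem tendsto_intCast_inv_cofinite :
    Tendsto (fun n : ℤ => (n : ℂ)⁻¹) cofinite (nhds 0) := by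
  have hcast : Tendsto (fun n : ℤ => (n : ℂ)) cofinite (Bornology.cobounded ℂ) := by
    rw [← tendsto_norm_atTop_iff_cobounded]
    exact (tendsto_norm_cocompact_atTop.comp Int.tendsto_coe_cofinite).congr fun n => by
      simp [Complex.norm_intCast]
  exact tendsto_inv₀_cobounded.comp hcast

theorem not_smoothInf_intCast_inv : ¬ SmoothInf fun n : ℤ => (n : ℂ)⁻¹ := by
  intro h
  have hdecay := h.tendsto_cofinite tendsto_intCast_inv_cofinite 1
  have hone : (fun n : ℤ => (n : ℂ) ^ 1 * ((n : ℂ)⁻¹ - 0)) =ᶠ[cofinite] fun _ => 1 := by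
    filter_upwards [eventually_cofinite_ne 0] with n hn
    simp [mul_inv_cancel₀ (Int.cast_ne_zero.2 hn : (n : ℂ) ≠ 0)]
  exact one_ne_zero (tendsto_nhds_unique (tendsto_const_nhds.congr' hone.symm) hdecay)

/-- The inclusion `ℓ^{∞∞}(ℤ) ⊆ ℓ^∞(ℤ)` is proper. -/
theorem stmt_11 : ∃ φ : ℤ → ℂ, (∃ C, ∀ n, ‖φ n‖ ≤ C) ∧ ¬ SmoothInf φ :=
  ⟨fun n => (n : ℂ)⁻¹, ⟨1, norm_intCast_inv_le_one⟩, not_smoothInf_intCast_inv⟩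
end

section
/- If φ ∈ ℓ^{∞∞}(ℤ), then φ takes only finitely many values on infinite level sets; that is, the set {c ∈ ℂ : φ⁻¹(c) is infinite} is finite. -/
/-!
The values taken on infinite level sets lie in the bounded range of `φ`, so if there were
infinitely many of them they would accumulate at some `c`, as limit of such values `x k ≠ c`.
Each level set `φ⁻¹' {x k}` being infinite, it contains some `n k` with `|n k| ≥ 1 / |x k - c|`.
Along the sequence `n k`, hence along any ultrafilter refining it, `φ` tends to `c` while
`n (φ n - c)` keeps norm at least `1`, contradicting the case `d = 1` of the definition of `ℓ^{∞∞}(ℤ)`.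
-/

open Filter

open Topology

theorem Set.Infinite.exists_seq_tendsto_of_isBounded {α : Type*} [PseudoMetricSpace α]
    [ProperSpace α] {s : Set α} (hs : s.Infinite) (hb : Bornology.IsBounded s) :
    ∃ (c : α) (x : ℕ → α), Tendsto x atTop (𝓝 c) ∧ ∀ᶠ k in atTop, x k ∈ s ∧ x k ≠ c := by
  obtain ⟨c, -, hc⟩ := hs.exists_accPt_of_subset_isCompact hb.isCompact_closure subset_closure
  have : (𝓝[≠] c ⊓ 𝓟 s).NeBot := hc
  obtain ⟨x, hx⟩ := exists_seq_tendsto (𝓝[≠] c ⊓ 𝓟 s)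
  refine ⟨c, x, hx.mono_right (inf_le_left.trans nhdsWithin_le_nhds), ?_⟩
  exact (tendsto_principal.1 (hx.mono_right inf_le_right)).and
    (tendsto_principal.1 (hx.mono_right (inf_le_left.trans inf_le_right)))

theorem Set.Infinite.exists_one_le_norm_intCast_mul {s : Set ℤ} (hs : s.Infinite) {z : ℂ}
    (hz : z ≠ 0) : ∃ n ∈ s, 1 ≤ ‖(n : ℂ) * z‖ := by
  have hlarge : ∀ᶠ n : ℤ in cofinite, ‖z‖⁻¹ ≤ ‖n‖ := by
    rw [← cocompact_eq_cofinite]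
    exact tendsto_norm_cocompact_atTop.eventually_ge_atTop _
  obtain ⟨n, hn, hR⟩ := ((Set.infinite_iff_frequently_cofinite.1 hs).and_eventually hlarge).exists
  refine ⟨n, hn, ?_⟩
  rw [norm_mul, Complex.norm_intCast, ← Int.norm_eq_abs]
  exact (inv_le_iff_one_le_mul₀ (norm_pos_iff.2 hz)).1 hR

namespace SmoothInf

variable {φ : ℤ → ℂ}

theorem isBounded_range (hφ : SmoothInf φ) : Bornology.IsBounded (Set.range φ) := by
  obtain ⟨C, hC⟩ := hφ.1
  exact isBounded_iff_forall_norm_le.2 ⟨C, Set.forall_mem_range.2 hC⟩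

theorem tendsto_pow_mul_sub (hφ : SmoothInf φ) {F : Filter ℤ} {L : ℂ}
    (hL : Tendsto φ F (𝓝 L)) (d : ℕ) :
    Tendsto (fun n : ℤ => (n : ℂ) ^ d * (φ n - L)) F (𝓝 0) :=
  (tendsto_iff_ultrafilter _ _ _).2 fun U hU => hφ.2 U d L (hL.mono_left hU)

end SmoothInf

/-- A function in `ℓ^{∞∞}(ℤ)` has only finitely many infinite level sets. -/
theorem stmt_15 (φ : ℤ → ℂ) (hφ : SmoothInf φ) :
    {c : ℂ | (φ ⁻¹' {c}).Infinite}.Finite := by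
  set S := {c : ℂ | (φ ⁻¹' {c}).Infinite}
  by_contra hS
  have hSb : Bornology.IsBounded S :=
    hφ.isBounded_range.subset fun c hc => hc.nonempty.imp fun n hn => hn
  obtain ⟨c, x, hx, hxS⟩ := Set.Infinite.exists_seq_tendsto_of_isBounded hS hSb
  have hfar : ∀ k, ∃ n : ℤ, x k ∈ S ∧ x k ≠ c → φ n = x k ∧ 1 ≤ ‖(n : ℂ) ^ 1 * (φ n - c)‖ := by
    intro k
    by_cases hk : x k ∈ S ∧ x k ≠ c
    · obtain ⟨n, hn, hn_far⟩ := hk.1.exists_one_le_norm_intCast_mul (sub_ne_zero.2 hk.2)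
      exact ⟨n, fun _ => ⟨hn, by rwa [hn, pow_one]⟩⟩
    · exact ⟨0, fun h => absurd h hk⟩
  choose n hn using hfar
  have hφn : Tendsto (φ ∘ n) atTop (𝓝 c) :=
    hx.congr' (hxS.mono fun k hk => (hn k hk).1.symm)
  have hsmall : Tendsto (fun k => ‖(n k : ℂ) ^ 1 * (φ (n k) - c)‖) atTop (𝓝 0) :=
    tendsto_zero_iff_norm_tendsto_zero.1 <|
      tendsto_map'_iff.1 (hφ.tendsto_pow_mul_sub (tendsto_map'_iff.2 hφn) 1)
  have hlarge : ∀ᶠ k in atTop, 1 ≤ ‖(n k : ℂ) ^ 1 * (φ (n k) - c)‖ :=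
    hxS.mono fun k hk => (hn k hk).2
  obtain ⟨k, hk_small, hk_large⟩ := ((hsmall.eventually (gt_mem_nhds one_pos)).and hlarge).exists
  exact hk_large.not_gt hk_small
end
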